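/- Let m* ∈ ℝ^d and let Σ* be a symmetric positive definite d×d real matrix. Then the range of the map φ_{μ*} over all Gaussian measures on ℝ^d, i.e., the set {φ_{μ*}(N(m,Σ)) : m ∈ ℝ^d, Σ symmetric positive semidefinite}, equals {(a,V) ∈ Ξ_d : V + I_d is positive semidefinite}. -/

import Mathlib

open MeasureTheory Matrix Filter ProbabilityTheory

open Classical in
/-- The unique symmetric positive semidefinite square root of a positive semidefinite real
matrix (junk value `0` if the matrix is not positive semidefinite). -/
noncomputable def matSqrt {d : ℕ} (A : Matrix (Fin d) (Fin d) ℝ) : Matrix (Fin d) (Fin d) ℝ :=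
  if h : A.PosSemidef then
    h.1.eigenvectorUnitary.1 * diagonal ((↑) ∘ (√·) ∘ h.1.eigenvalues) *
      (star h.1.eigenvectorUnitary : Matrix (Fin d) (Fin d) ℝ) else 0

/-- `S(Σ₁, Σ₂) = Σ₁^{-1/2} (Σ₁^{1/2} Σ₂ Σ₁^{1/2})^{1/2} Σ₁^{-1/2}`. -/
noncomputable def Smat {d : ℕ} (S1 S2 : Matrix (Fin d) (Fin d) ℝ) : Matrix (Fin d) (Fin d) ℝ :=
  (matSqrt S1)⁻¹ * matSqrt (matSqrt S1 * S2 * matSqrt S1) * (matSqrt S1)⁻¹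

open Classical in
/-- The Gaussian measure `N(m, Σ)` on `ℝ^d`, realized as the pushforward of a product of
standard real Gaussians under `x ↦ m + Σ^{1/2} x` (junk value `0` if `Σ` is not psd). -/
noncomputable def gaussianMeasure {d : ℕ} (m : Fin d → ℝ) (S : Matrix (Fin d) (Fin d) ℝ) :
    Measure (Fin d → ℝ) :=
  if _h : S.PosSemidef then
    (Measure.pi fun _ : Fin d => gaussianReal 0 1).map (fun x => m + (matSqrt S).mulVec x)
  else 0

/-- Squared euclidean distance on `ℝ^d`. -/
def sqDist {d : ℕ} (x y : Fin d → ℝ) : ℝ := ∑ i, (x i - y i) ^ 2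

/-- The 2-Wasserstein distance between two measures on `ℝ^d` (with the euclidean cost). -/
noncomputable def W2 {d : ℕ} (μ ν : Measure (Fin d → ℝ)) : ℝ :=
  Real.sqrt (⨅ π ∈ {π : Measure ((Fin d → ℝ) × (Fin d → ℝ)) |
      IsProbabilityMeasure π ∧ π.map Prod.fst = μ ∧ π.map Prod.snd = ν},
    ∫⁻ p, ENNReal.ofReal (sqDist p.1 p.2) ∂π).toReal

/-- The inner product `⟨(a,V),(b,U)⟩_{(m*,Σ*)}` on `Ξ_d`. -/
noncomputable def xiInner {d : ℕ} (ms : Fin d → ℝ) (Ss : Matrix (Fin d) (Fin d) ℝ)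
    (a : Fin d → ℝ) (V : Matrix (Fin d) (Fin d) ℝ)
    (b : Fin d → ℝ) (U : Matrix (Fin d) (Fin d) ℝ) : ℝ :=
  (a + V.mulVec ms) ⬝ᵥ (b + U.mulVec ms) + (V * Ss * U).trace

/-- The squared norm `‖(a,V)‖²_{(m*,Σ*)} = ‖a + V m*‖² + tr(V Σ* V)` on `Ξ_d`. -/
noncomputable def xiNormSq {d : ℕ} (ms : Fin d → ℝ) (Ss : Matrix (Fin d) (Fin d) ℝ)
    (a : Fin d → ℝ) (V : Matrix (Fin d) (Fin d) ℝ) : ℝ :=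
  (∑ i, (a i + V.mulVec ms i) ^ 2) + (V * Ss * V).trace

/-- The norm `‖(a,V)‖_{(m*,Σ*)}` on `Ξ_d`. -/
noncomputable def xiNorm {d : ℕ} (ms : Fin d → ℝ) (Ss : Matrix (Fin d) (Fin d) ℝ)
    (a : Fin d → ℝ) (V : Matrix (Fin d) (Fin d) ℝ) : ℝ :=
  Real.sqrt (xiNormSq ms Ss a V)

/-
Writing `B = Σ*^{1/2}`, the map `Σ ↦ S(Σ*, Σ)` is a congruence by `B⁻¹` applied to a square root,
so it lands in the positive semidefinite cone. Conversely, for `W` positive semidefinite the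
covariance `Σ = W Σ* W` gives `B Σ B = (B W B)²`, whence `S(Σ*, Σ) = W`; the mean
`m = a + W m*` then produces any prescribed `a`.
-/

lemma Matrix.PosSemidef.mul_mul_of_isHermitian {n R : Type*} [Fintype n] [Ring R]
    [PartialOrder R] [StarRing R] {A X : Matrix n n R} (hA : A.PosSemidef) (hX : X.IsHermitian) :
    (X * A * X).PosSemidef := by
  simpa only [hX.eq] using hA.conjTranspose_mul_mul_same X

open scoped MatrixOrder in
lemma matSqrt_eq_cfc {d : ℕ} {A : Matrix (Fin d) (Fin d) ℝ} (hA : A.PosSemidef) :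
    matSqrt A = CFC.sqrt A := by
  rw [CFC.sqrt_eq_cfc, cfc_nnreal_eq_real _ A, hA.1.cfc_eq, matSqrt, dif_pos hA]
  simp only [IsHermitian.cfc, Unitary.conjStarAlgAut_apply]
  congr 3
  ext i
  simp [Real.coe_sqrt, Real.coe_toNNReal', max_eq_left (hA.eigenvalues_nonneg i)]

-- No hypothesis on `A`: the junk value `0` is positive semidefinite.
open scoped MatrixOrder in
lemma matSqrt_posSemidef {d : ℕ} (A : Matrix (Fin d) (Fin d) ℝ) : (matSqrt A).PosSemidef := by
  by_cases hA : A.PosSemidef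
  · rw [matSqrt_eq_cfc hA]
    exact nonneg_iff_posSemidef.mp (CFC.sqrt_nonneg A)
  · rw [matSqrt, dif_neg hA]
    exact PosSemidef.zero

open scoped MatrixOrder in
lemma matSqrt_mul_self {d : ℕ} {A : Matrix (Fin d) (Fin d) ℝ} (hA : A.PosSemidef) :
    matSqrt A * matSqrt A = A := by
  rw [matSqrt_eq_cfc hA]
  exact CFC.sqrt_mul_sqrt_self A hA.nonneg

open scoped MatrixOrder in
lemma matSqrt_eq_of_mul_self {d : ℕ} {A B : Matrix (Fin d) (Fin d) ℝ} (hB : B.PosSemidef)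
    (h : B * B = A) : matSqrt A = B := by
  have hA : A.PosSemidef := by
    rw [← h, ← pow_two]
    exact hB.pow 2
  rw [matSqrt_eq_cfc hA]
  exact CFC.sqrt_unique h hB.nonneg

lemma isUnit_det_matSqrt {d : ℕ} {A : Matrix (Fin d) (Fin d) ℝ} (hA : A.PosDef) :
    IsUnit (matSqrt A).det := by
  have h : IsUnit ((matSqrt A).det * (matSqrt A).det) := by
    rw [← det_mul, matSqrt_mul_self hA.posSemidef]
    exact isUnit_iff_ne_zero.mpr hA.det_pos.ne'
  exact isUnit_of_mul_isUnit_left h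

lemma Smat_posSemidef {d : ℕ} (S1 S2 : Matrix (Fin d) (Fin d) ℝ) : (Smat S1 S2).PosSemidef := by
  rw [Smat]
  exact (matSqrt_posSemidef _).mul_mul_of_isHermitian (matSqrt_posSemidef S1).isHermitian.inv

lemma Smat_mul_mul_self {d : ℕ} {S1 W : Matrix (Fin d) (Fin d) ℝ} (hS1 : S1.PosDef)
    (hW : W.PosSemidef) : Smat S1 (W * S1 * W) = W := by
  have hunit := isUnit_det_matSqrt hS1
  rw [Smat]
  set B := matSqrt S1
  have hBB : B * B = S1 := matSqrt_mul_self hS1.posSemidef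
  have hBWB : (B * W * B).PosSemidef :=
    hW.mul_mul_of_isHermitian (matSqrt_posSemidef S1).isHermitian
  have hsq : (B * W * B) * (B * W * B) = B * (W * S1 * W) * B := by
    simp only [← hBB, Matrix.mul_assoc]
  rw [matSqrt_eq_of_mul_self hBWB hsq, Matrix.mul_assoc B W B,
    nonsing_inv_mul_cancel_left _ _ hunit, mul_nonsing_inv_cancel_right _ _ hunit]

/-- For a reference `μ* = N(m*,Σ*)` with `Σ*` symmetric positive definite,
the range of `φ_{μ*}` over all Gaussian measures `N(m,Σ)` (with `Σ` symmetric positive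
semidefinite) equals `{(a,V) ∈ Ξ_d : V + I is positive semidefinite}`. -/
theorem stmt_9 {d : ℕ} (ms : Fin d → ℝ) (Ss : Matrix (Fin d) (Fin d) ℝ) (hSs : Ss.PosDef) :
    {p : (Fin d → ℝ) × Matrix (Fin d) (Fin d) ℝ |
        ∃ m S, S.PosSemidef ∧ p = (m - (Smat Ss S).mulVec ms, Smat Ss S - 1)}
      = {p : (Fin d → ℝ) × Matrix (Fin d) (Fin d) ℝ | (p.2 + 1).PosSemidef} := by
  ext ⟨a, V⟩
  simp only [Set.mem_ofPred_eq]
  constructor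
  · rintro ⟨m, S, -, h⟩
    obtain ⟨-, rfl⟩ := Prod.mk.inj h
    rw [sub_add_cancel]
    exact Smat_posSemidef Ss S
  · intro hW
    refine ⟨a + (V + 1) *ᵥ ms, (V + 1) * Ss * (V + 1), ?_, ?_⟩
    · exact hSs.posSemidef.mul_mul_of_isHermitian hW.isHermitian
    · rw [Smat_mul_mul_self hSs hW]
      simp
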